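/- arXiv:0812.0380 — 5 statements merged into one kernel-verified Lean document; each statement's English description precedes it below -/
import Mathlib

section
/- Let N be an odd positive integer with at least two distinct prime factors. If a is chosen uniformly at random from the multiplicative group (ℤ/Nℤ)^×, then with probability at least 1/2 the multiplicative order r of a modulo N is even and a^{r/2} ≢ −1 (mod N). Equivalently, the number of units a ∈ (ℤ/Nℤ)^× such that the order r of a is even and a^{r/2} ≠ −1 in ℤ/Nℤ is at least |(ℤ/Nℤ)^×|/2. -/
/-!
Write `N = p ^ k * m` with `p ∤ m`, so that `(ZMod N)ˣ ≃* (ZMod (p ^ k))ˣ × (ZMod m)ˣ`, where the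
first factor is cyclic of even order. If `a ↦ (x, y)` has odd order `r`, or `a ^ (r / 2) = -1`,
then `x` and `y` both have orders with the same 2-adic valuation as `r`. In a cyclic group of even
order `n`, the elements whose order has 2-adic valuation below `v₂ n` form the kernel of
`x ↦ x ^ (n / 2)`, a subgroup of index 2, so for every `y` at most half of the `x` satisfy
`v₂ (orderOf x) = v₂ (orderOf y)`.
-/

open Finset

namespace Nat

theorem dvd_div_two_iff_factorization_lt {d n : ℕ} (hdn : d ∣ n) (hn : n ≠ 0) (hn2 : Even n) :
    d ∣ n / 2 ↔ d.factorization 2 < n.factorization 2 := by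
  obtain ⟨e, rfl⟩ := hdn
  have hd : d ≠ 0 := left_ne_zero_of_mul hn
  have he : e ≠ 0 := right_ne_zero_of_mul hn
  rw [dvd_div_iff_mul_dvd hn2.two_dvd, mul_comm 2 d, Nat.mul_dvd_mul_iff_left (pos_of_ne_zero hd),
    prime_two.dvd_iff_one_le_factorization he, factorization_mul hd he, Finsupp.add_apply]
  omega

theorem Prime.three_le_of_dvd_odd {p n : ℕ} (hp : p.Prime) (hpn : p ∣ n) (hn : Odd n) :
    3 ≤ p := by
  have : p ≠ 2 := by rintro rfl; exact hn.not_two_dvd_nat hpn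
  have := hp.two_le
  omega

end Nat

theorem factorization_orderOf_eq_of_pow_div_two_ne_one {M : Type*} [Monoid M] {x : M} {r : ℕ}
    (hr : r ≠ 0) (hx : orderOf x ∣ r) (h : Odd r ∨ x ^ (r / 2) ≠ 1) :
    (orderOf x).factorization 2 = r.factorization 2 := by
  rcases r.even_or_odd with hr2 | hodd
  · have hle := (Nat.factorization_le_iff_dvd (ne_zero_of_dvd_ne_zero hr hx) hr).2 hx 2
    have hlt := (Nat.dvd_div_two_iff_factorization_lt hx hr hr2).not.1 <|
      mt orderOf_dvd_iff_pow_eq_one.1 (h.resolve_left (Nat.not_odd_iff_even.2 hr2))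
    omega
  · rw [Nat.factorization_eq_zero_of_not_dvd hodd.not_two_dvd_nat,
      Nat.factorization_eq_zero_of_not_dvd fun h2 => hodd.not_two_dvd_nat (h2.trans hx)]

theorem Prod.factorization_orderOf_fst_eq_snd {M N : Type*} [Monoid M] [Monoid N]
    [HasDistribNeg M] [HasDistribNeg N] (hM : (-1 : M) ≠ 1) (hN : (-1 : N) ≠ 1) {z : M × N}
    (hz : IsOfFinOrder z) (h : Odd (orderOf z) ∨ z ^ (orderOf z / 2) = -1) :
    (orderOf z.1).factorization 2 = (orderOf z.2).factorization 2 := by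
  have hr := hz.orderOf_pos.ne'
  rw [factorization_orderOf_eq_of_pow_div_two_ne_one hr orderOf_fst_dvd_orderOf
      (h.imp_right fun h => by rw [← Prod.pow_fst, h]; exact hM),
    factorization_orderOf_eq_of_pow_div_two_ne_one hr orderOf_snd_dvd_orderOf
      (h.imp_right fun h => by rw [← Prod.pow_snd, h]; exact hN)]

namespace IsCyclic

variable {G : Type*} [CommGroup G] [IsCyclic G] [Fintype G] [DecidableEq G]

theorem two_mul_card_pow_div_two_eq_one (hG : Even (Fintype.card G)) :
    2 * #{x : G | x ^ (Fintype.card G / 2) = 1} = Fintype.card G := by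
  have hcard : Nat.card (powMonoidHom (Fintype.card G / 2) : G →* G).ker =
      #{x : G | x ^ (Fintype.card G / 2) = 1} := by
    rw [← Fintype.card_subtype, ← Nat.card_eq_fintype_card (α := {x : G // _})]
    rfl
  rw [← hcard, card_powMonoidHom_ker, Nat.card_eq_fintype_card,
    Nat.gcd_eq_right (Nat.div_dvd_of_dvd hG.two_dvd), Nat.mul_div_cancel' hG.two_dvd]

theorem two_mul_card_factorization_orderOf_eq_le (hG : Even (Fintype.card G)) (j : ℕ) :
    2 * #{x : G | (orderOf x).factorization 2 = j} ≤ Fintype.card G := by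
  have hmem (x : G) : x ^ (Fintype.card G / 2) = 1 ↔
      (orderOf x).factorization 2 < (Fintype.card G).factorization 2 :=
    orderOf_dvd_iff_pow_eq_one.symm.trans <|
      Nat.dvd_div_two_iff_factorization_lt orderOf_dvd_card Fintype.card_ne_zero hG
  have hker := two_mul_card_pow_div_two_eq_one hG
  by_cases hj : j < (Fintype.card G).factorization 2
  · calc 2 * #{x : G | (orderOf x).factorization 2 = j}
        ≤ 2 * #{x : G | x ^ (Fintype.card G / 2) = 1} := by
          gcongr with x
          exact fun hx => (hmem x).2 (hx ▸ hj)
      _ = Fintype.card G := hker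
  · have hsplit := card_filter_add_card_filter_not (s := univ)
      fun x : G => x ^ (Fintype.card G / 2) = 1
    rw [card_univ] at hsplit
    calc 2 * #{x : G | (orderOf x).factorization 2 = j}
        ≤ 2 * #{x : G | ¬ x ^ (Fintype.card G / 2) = 1} := by
          gcongr with x
          exact fun hx => (hmem x).not.2 (hx ▸ hj)
      _ = Fintype.card G := by omega

end IsCyclic

theorem Fintype.mul_card_filter_le_of_forall_fiber {α β : Type*} [Fintype α] [Fintype β]
    (P : α × β → Prop) [DecidablePred P] {k m : ℕ} (h : ∀ y, k * #{x | P (x, y)} ≤ m) :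
    k * #{z | P z} ≤ m * Fintype.card β := by
  rw [card_filter, Fintype.sum_prod_type_right, mul_sum]
  simp_rw [← card_filter]
  exact (sum_le_sum fun y _ => h y).trans (by simp [mul_comm])

theorem RingEquiv.card_units_le_two_mul_card_orderOf_even_pow_half_ne_neg_one
    {R S T : Type*} [Ring R] [CommRing S] [Ring T] [Finite S] [Finite T] (e : R ≃+* S × T)
    [IsCyclic Sˣ] (hS : Even (Nat.card Sˣ)) (hS1 : (-1 : S) ≠ 1) (hT1 : (-1 : T) ≠ 1) :
    Nat.card Rˣ ≤
      2 * Nat.card {a : Rˣ // Even (orderOf a) ∧ ((a : R) ^ (orderOf a / 2) ≠ -1)} := by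
  classical
  let E : Rˣ ≃* Sˣ × Tˣ := (Units.mapEquiv e.toMulEquiv).trans MulEquiv.prodUnits
  have : Fintype Sˣ := Fintype.ofFinite _
  have : Fintype Tˣ := Fintype.ofFinite _
  have : Fintype Rˣ := Fintype.ofEquiv _ E.symm.toEquiv
  have hE (u : Rˣ) (hu : (u : R) = -1) : E u = -1 := by
    refine Prod.ext (Units.ext ?_) (Units.ext ?_)
    · show (e u).1 = -1
      simp [hu]
    · show (e u).2 = -1
      simp [hu]
  have hbad (a : Rˣ) (ha : ¬ (Even (orderOf a) ∧ (a : R) ^ (orderOf a / 2) ≠ -1)) :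
      (orderOf (E a).1).factorization 2 = (orderOf (E a).2).factorization 2 := by
    refine Prod.factorization_orderOf_fst_eq_snd
      (fun h => hS1 (by simpa using congrArg Units.val h))
      (fun h => hT1 (by simpa using congrArg Units.val h)) (isOfFinOrder_of_finite _) ?_
    rw [E.orderOf_eq, ← map_pow]
    rw [not_and_or, Nat.not_even_iff_odd, not_not] at ha
    exact ha.imp_right fun h => hE _ (by simpa using h)
  have hbad_le : #{a : Rˣ | ¬ (Even (orderOf a) ∧ (a : R) ^ (orderOf a / 2) ≠ -1)} ≤
      #{z : Sˣ × Tˣ | (orderOf z.1).factorization 2 = (orderOf z.2).factorization 2} :=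
    card_le_card_of_injOn E (fun a ha => by simpa using hbad a (by simpa using ha))
      E.injective.injOn
  have hS' : Even (Fintype.card Sˣ) := Nat.card_eq_fintype_card (α := Sˣ) ▸ hS
  have hfiber (y : Tˣ) : 2 * #{x : Sˣ | (orderOf x).factorization 2 =
      (orderOf y).factorization 2} ≤ Fintype.card Sˣ :=
    IsCyclic.two_mul_card_factorization_orderOf_eq_le hS' _
  have hpairs : 2 * #{z : Sˣ × Tˣ | (orderOf z.1).factorization 2 =
      (orderOf z.2).factorization 2} ≤ Fintype.card Sˣ * Fintype.card Tˣ :=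
    Fintype.mul_card_filter_le_of_forall_fiber _ hfiber
  have hcard : Fintype.card Sˣ * Fintype.card Tˣ = Fintype.card Rˣ := by
    rw [← Fintype.card_prod]
    exact (Fintype.card_congr E.toEquiv).symm
  have hsplit := card_filter_add_card_filter_not (s := univ)
    fun a : Rˣ => Even (orderOf a) ∧ (a : R) ^ (orderOf a / 2) ≠ -1
  rw [card_univ] at hsplit
  rw [Nat.card_eq_fintype_card, Nat.card_eq_fintype_card, Fintype.card_subtype]
  omega

/-- Miller's lemma: for odd `N` with at least two distinct prime factors, at least half
of the units `a` modulo `N` have even multiplicative order `r` with `a^(r/2) ≠ -1`. -/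
theorem stmt_0 (N : ℕ) (hN : Odd N) (p q : ℕ) (hp : p.Prime) (hq : q.Prime)
    (hpq : p ≠ q) (hpN : p ∣ N) (hqN : q ∣ N) :
    Nat.card (ZMod N)ˣ ≤
      2 * Nat.card {a : (ZMod N)ˣ //
        Even (orderOf a) ∧ ((a : ZMod N) ^ (orderOf a / 2) ≠ -1)} := by
  have hp3 := hp.three_le_of_dvd_odd hpN hN
  have hq3 := hq.three_le_of_dvd_odd hqN hN
  obtain ⟨k, m, hpm, rfl⟩ := Nat.exists_eq_pow_mul_and_not_dvd hN.pos.ne' p hp.one_lt.ne'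
  have hk : k ≠ 0 := by rintro rfl; simp_all
  have hm : m ≠ 0 := right_ne_zero_of_mul hN.pos.ne'
  have hqm : q ∣ m :=
    (Nat.Coprime.pow_right k ((Nat.coprime_primes hq hp).2 hpq.symm)).dvd_of_dvd_mul_left hqN
  have hcop : (p ^ k).Coprime m := Nat.Coprime.pow_left k (hp.coprime_iff_not_dvd.2 hpm)
  have : NeZero (p ^ k) := ⟨pow_ne_zero k hp.ne_zero⟩
  have : NeZero m := ⟨hm⟩
  have : Fact (2 < p ^ k) := ⟨by have := Nat.le_self_pow hk p; omega⟩
  have : Fact (2 < m) := ⟨by have := Nat.le_of_dvd (Nat.pos_of_ne_zero hm) hqm; omega⟩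
  have := ZMod.isCyclic_units_of_prime_pow p hp (by omega) k
  refine (ZMod.chineseRemainder hcop).card_units_le_two_mul_card_orderOf_even_pow_half_ne_neg_one
    ?_ ZMod.neg_one_ne_one ZMod.neg_one_ne_one
  rw [Nat.card_eq_fintype_card, ZMod.card_units_eq_totient]
  exact Nat.totient_even Fact.out
end

section
/- Let N = p₁^{m₁} ⋯ p_k^{m_k} with k ≥ 2, where p₁,…,p_k are distinct odd primes and m_i ≥ 1. Let a be a unit modulo N with multiplicative order r, and for each i let r_i be the multiplicative order of the image of a in (ℤ/p_i^{m_i}ℤ)^×. If r is odd, or if r is even and a^{r/2} ≡ −1 (mod N), then the 2-adic valuations of r₁, …, r_k are all equal. -/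
lemma aux_val_eq (r s : ℕ) (hs0 : s ≠ 0) (h : s ∣ r) (hns : ¬ s ∣ r / 2) :
    padicValNat 2 s = padicValNat 2 r := by
  obtain ⟨t, rfl⟩ := h
  have ht0 : t ≠ 0 := by rintro rfl; simp at hns
  have htodd : ¬ 2 ∣ t := by
    intro h2
    obtain ⟨q, rfl⟩ := h2
    apply hns
    have : s * (2 * q) / 2 = s * q := by
      rw [show s * (2 * q) = s * q * 2 by ring, Nat.mul_div_cancel _ (by norm_num)]
    rw [this]; exact Dvd.intro q rfl
  rw [padicValNat.mul hs0 ht0, padicValNat.eq_zero_of_not_dvd htodd, Nat.add_zero]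

/-- If `N = p₁^{m₁} ⋯ p_k^{m_k}` with `k ≥ 2` distinct odd primes, `a` is a unit mod `N`
with order `r`, and either `r` is odd or `r` is even with `a^{r/2} ≡ -1 (mod N)`,
then the 2-adic valuations of the orders `r_i` of `a` modulo `p_i^{m_i}` all agree. -/
theorem stmt_1 (k : ℕ) (hk : 2 ≤ k) (p m : Fin k → ℕ)
    (hp : ∀ i, (p i).Prime) (hodd : ∀ i, Odd (p i))
    (hinj : Function.Injective p) (hm : ∀ i, 1 ≤ m i)
    (N : ℕ) (hN : N = ∏ i, p i ^ m i)
    (a : (ZMod N)ˣ)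
    (hcond : Odd (orderOf a) ∨
      (Even (orderOf a) ∧ ((a : ZMod N) ^ (orderOf a / 2) = -1))) :
    ∀ i j : Fin k,
      padicValNat 2 (orderOf (ZMod.unitsMap
        (show p i ^ m i ∣ N by
          rw [hN]; exact Finset.dvd_prod_of_mem _ (Finset.mem_univ i)) a))
      = padicValNat 2 (orderOf (ZMod.unitsMap
        (show p j ^ m j ∣ N by
          rw [hN]; exact Finset.dvd_prod_of_mem _ (Finset.mem_univ j)) a)) := by
  have hNdvd : ∀ i : Fin k, p i ^ m i ∣ N := fun i => by
    rw [hN]; exact Finset.dvd_prod_of_mem _ (Finset.mem_univ i)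
  haveI : NeZero N := ⟨by
    rw [hN]
    exact Finset.prod_ne_zero_iff.mpr fun i _ => pow_ne_zero _ (hp i).ne_zero⟩
  have hdvd : ∀ i : Fin k, orderOf (ZMod.unitsMap (hNdvd i) a) ∣ orderOf a :=
    fun i => orderOf_map_dvd _ a
  have hord0 : ∀ i : Fin k, orderOf (ZMod.unitsMap (hNdvd i) a) ≠ 0 :=
    fun i => (orderOf_pos _).ne'
  -- main claim: for each i, padicValNat 2 (orderOf (unitsMap _ a)) = padicValNat 2 (orderOf a)
  -- in the even case; in the odd case, both are 0.
  suffices h : ∀ i : Fin k,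
      padicValNat 2 (orderOf (ZMod.unitsMap (hNdvd i) a)) = padicValNat 2 (orderOf a) by
    intro i j; rw [h i, h j]
  intro i
  rcases hcond with hO | ⟨hE, hpow⟩
  · have h1 : ¬ 2 ∣ orderOf (ZMod.unitsMap (hNdvd i) a) := by
      intro h2
      exact (Nat.not_even_iff_odd.mpr hO) (even_iff_two_dvd.mpr (h2.trans (hdvd i)))
    rw [padicValNat.eq_zero_of_not_dvd h1,
      padicValNat.eq_zero_of_not_dvd (Nat.not_even_iff_odd.mpr hO ∘ even_iff_two_dvd.mpr)]
  · apply aux_val_eq _ _ (hord0 i) (hdvd i)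
    intro hdvd2
    -- then (unitsMap a)^(r/2) = 1, but it equals -1
    have hu : a ^ (orderOf a / 2) = (-1 : (ZMod N)ˣ) := by
      ext; push_cast; exact hpow
    have h1 : (ZMod.unitsMap (hNdvd i) a) ^ (orderOf a / 2) = 1 :=
      orderOf_dvd_iff_pow_eq_one.mp hdvd2
    have h2 : (ZMod.unitsMap (hNdvd i) a) ^ (orderOf a / 2) = -1 := by
      rw [← map_pow, hu]
      ext
      rw [ZMod.unitsMap_def, Units.coe_map, Units.val_neg, Units.val_one,
        Units.val_neg, Units.val_one]
      exact (by rw [map_neg, map_one] :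
        (ZMod.castHom (hNdvd i) (ZMod (p i ^ m i))) (-1) = -1)
    rw [h1] at h2
    haveI : Fact (2 < p i ^ m i) := ⟨by
      have h3 : 3 ≤ p i := (hp i).two_le.lt_of_ne (by
        rintro h; exact (Nat.not_odd_iff_even.mpr (h ▸ even_two)) (hodd i))
      calc 2 < 3 := by norm_num
        _ ≤ p i := h3
        _ ≤ p i ^ m i := Nat.le_self_pow (Nat.one_le_iff_ne_zero.mp (hm i)) _⟩
    have h3 : (1 : ZMod (p i ^ m i)) = -1 := by
      have := congrArg Units.val h2
      simpa using this
    exact ZMod.neg_one_ne_one h3.symm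
end

section
/- Let G be a finite abelian group (written multiplicatively), S a set, s ∈ G, and f₀, f₁ : G → S injective functions satisfying f₀(g) = f₁(s·g) for all g ∈ G. Form the semidirect product G ⋊ ℤ/2ℤ where the nontrivial element of ℤ/2ℤ acts on G by inversion x ↦ x⁻¹, and define f : G ⋊ ℤ/2ℤ → S by f(x,0) := f₀(x) and f(x,1) := f₁(x). Then H := {(1,0), (s,1)} is a subgroup of G ⋊ ℤ/2ℤ of order 2, and f hides H: for all elements g, g' of G ⋊ ℤ/2ℤ, f(g) = f(g') if and only if g⁻¹·g' ∈ H. -/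
/-- Inversion as a multiplicative automorphism of an abelian group. -/
def invAut (G : Type*) [CommGroup G] : MulAut G where
  toFun x := x⁻¹
  invFun x := x⁻¹
  left_inv x := inv_inv x
  right_inv x := inv_inv x
  map_mul' x y := mul_inv x y

/-- The action of `ℤ/2ℤ` on an abelian group `G` in which the nontrivial element acts by
inversion `x ↦ x⁻¹`. -/
def invHom (G : Type*) [CommGroup G] : Multiplicative (ZMod 2) →* MulAut G where
  toFun a := invAut G ^ (Multiplicative.toAdd a).val
  map_one' := by simp
  map_mul' a b := by
    have h2 : invAut G ^ 2 = 1 := by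
      ext x
      simp [invAut, pow_succ]
    have key : ∀ j : ℕ, invAut G ^ j = invAut G ^ (j % 2) := by
      intro j
      conv_lhs => rw [← Nat.div_add_mod j 2]
      rw [pow_add, pow_mul, h2, one_pow, one_mul]
    show invAut G ^ (Multiplicative.toAdd (a * b)).val =
      invAut G ^ (Multiplicative.toAdd a).val * invAut G ^ (Multiplicative.toAdd b).val
    rw [← pow_add, key ((Multiplicative.toAdd (a * b)).val),
      key ((Multiplicative.toAdd a).val + (Multiplicative.toAdd b).val)]
    congr 1
    rw [toAdd_mul, ZMod.val_add]
    omega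

section
variable {G : Type*} [CommGroup G]

lemma invHom_zero (x : G) : invHom G (Multiplicative.ofAdd 0) x = x := by
  show (invAut G ^ (Multiplicative.toAdd (Multiplicative.ofAdd (0:ZMod 2))).val) x = x
  simp

lemma invHom_one (x : G) : invHom G (Multiplicative.ofAdd 1) x = x⁻¹ := by
  show (invAut G ^ (Multiplicative.toAdd (Multiplicative.ofAdd (1:ZMod 2))).val) x = x⁻¹
  have : (Multiplicative.toAdd (Multiplicative.ofAdd (1:ZMod 2))).val = 1 := by decide
  rw [this]; simp [invAut]

lemma zmod2_cases : ∀ a : Multiplicative (ZMod 2),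
    a = Multiplicative.ofAdd 0 ∨ a = Multiplicative.ofAdd 1 := by decide

lemma zmod2_inv : ∀ a : Multiplicative (ZMod 2), a⁻¹ = a := by decide

lemma mk_mul (x y : G) (a b : Multiplicative (ZMod 2)) :
    (⟨x, a⟩ : G ⋊[invHom G] Multiplicative (ZMod 2)) * ⟨y, b⟩ = ⟨x * invHom G a y, a * b⟩ := rfl

lemma mk_inv (x : G) (a : Multiplicative (ZMod 2)) :
    (⟨x, a⟩ : G ⋊[invHom G] Multiplicative (ZMod 2))⁻¹ = ⟨invHom G a (x⁻¹), a⟩ := by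
  have : (⟨x, a⟩ : G ⋊[invHom G] Multiplicative (ZMod 2))⁻¹ = ⟨invHom G a⁻¹ (x⁻¹), a⁻¹⟩ := rfl
  rw [this, zmod2_inv]

end

set_option maxHeartbeats 2000000 in
/-- Reduction of the abelian hidden shift problem to a hidden subgroup problem in the
`G`-dihedral group `G ⋊ ℤ/2ℤ`: the function `f(x,0) = f₀(x)`, `f(x,1) = f₁(x)` hides the
order-two subgroup `{(1,0), (s,1)}`. -/
theorem stmt_4 {G S : Type*} [CommGroup G] [Finite G] (s : G)
    (f₀ f₁ : G → S) (h₀ : Function.Injective f₀) (h₁ : Function.Injective f₁)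
    (hshift : ∀ g : G, f₀ g = f₁ (s * g)) :
    ∃ H : Subgroup (G ⋊[invHom G] Multiplicative (ZMod 2)),
      (H : Set (G ⋊[invHom G] Multiplicative (ZMod 2))) =
          {1, ⟨s, Multiplicative.ofAdd 1⟩} ∧
      Nat.card H ∣ 2 ∧
      (s ≠ 1 → Nat.card H = 2) ∧
      (∀ g g' : G ⋊[invHom G] Multiplicative (ZMod 2),
        (if Multiplicative.toAdd g.right = 0 then f₀ g.left else f₁ g.left) =
          (if Multiplicative.toAdd g'.right = 0 then f₀ g'.left else f₁ g'.left) ↔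
        g⁻¹ * g' ∈ H) := by
  set P := G ⋊[invHom G] Multiplicative (ZMod 2) with hP
  have hone : (1 : P) = ⟨1, Multiplicative.ofAdd 0⟩ := rfl
  have hmulone : Multiplicative.ofAdd (1 : ZMod 2) * Multiplicative.ofAdd 1 =
      Multiplicative.ofAdd 0 := by decide
  have hs2 : (⟨s, Multiplicative.ofAdd 1⟩ : P) * ⟨s, Multiplicative.ofAdd 1⟩ = 1 := by
    rw [mk_mul, invHom_one, mul_inv_cancel, hmulone, hone]
  have hsinv : (⟨s, Multiplicative.ofAdd 1⟩ : P)⁻¹ = ⟨s, Multiplicative.ofAdd 1⟩ := by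
    rw [mk_inv, invHom_one, inv_inv]
  refine ⟨{ carrier := {1, ⟨s, Multiplicative.ofAdd 1⟩}
            one_mem' := Or.inl rfl
            mul_mem' := ?_
            inv_mem' := ?_ }, rfl, ?_, ?_, ?_⟩
  · rintro a b (rfl | ha) (rfl | hb)
    · exact Or.inl (one_mul 1)
    · rw [Set.mem_singleton_iff] at hb; subst hb; rw [one_mul]; exact Or.inr rfl
    · rw [Set.mem_singleton_iff] at ha; subst ha; rw [mul_one]; exact Or.inr rfl
    · rw [Set.mem_singleton_iff] at ha hb; subst ha; subst hb; exact Or.inl hs2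
  · rintro a (rfl | ha)
    · exact Or.inl inv_one
    · rw [Set.mem_singleton_iff] at ha; subst ha; exact Or.inr hsinv
  all_goals
    have hne : (1 : P) ≠ ⟨s, Multiplicative.ofAdd 1⟩ := by
      intro h
      have h2 := congrArg SemidirectProduct.right h
      rw [hone] at h2
      dsimp only at h2
      exact absurd h2 (by decide)
  case _ =>
    have hcard : Nat.card {z : P // z ∈ ({1, ⟨s, Multiplicative.ofAdd 1⟩} : Set P)} = 2 :=
      (Nat.card_coe_set_eq
        ({1, ⟨s, Multiplicative.ofAdd 1⟩} : Set P)).trans (Set.ncard_pair hne)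
    show Nat.card {z : P // z ∈ ({1, ⟨s, Multiplicative.ofAdd 1⟩} : Set P)} ∣ 2
    rw [hcard]
  case _ =>
    intro _
    have hcard : Nat.card {z : P // z ∈ ({1, ⟨s, Multiplicative.ofAdd 1⟩} : Set P)} = 2 :=
      (Nat.card_coe_set_eq
        ({1, ⟨s, Multiplicative.ofAdd 1⟩} : Set P)).trans (Set.ncard_pair hne)
    show Nat.card {z : P // z ∈ ({1, ⟨s, Multiplicative.ofAdd 1⟩} : Set P)} = 2
    exact hcard
  case _ =>
    intro g g'
    obtain ⟨x, a⟩ := g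
    obtain ⟨y, b⟩ := g'
    have h00 : Multiplicative.ofAdd (0:ZMod 2) * Multiplicative.ofAdd 0 =
        Multiplicative.ofAdd 0 := by decide
    have h01 : Multiplicative.ofAdd (0:ZMod 2) * Multiplicative.ofAdd 1 =
        Multiplicative.ofAdd 1 := by decide
    have h10 : Multiplicative.ofAdd (1:ZMod 2) * Multiplicative.ofAdd 0 =
        Multiplicative.ofAdd 1 := by decide
    rcases zmod2_cases a with rfl | rfl <;> rcases zmod2_cases b with rfl | rfl
    · have hz : (⟨x, Multiplicative.ofAdd 0⟩ : P)⁻¹ * ⟨y, Multiplicative.ofAdd 0⟩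
          = ⟨x⁻¹ * y, Multiplicative.ofAdd 0⟩ := by
        rw [mk_inv, mk_mul, invHom_zero, invHom_zero, h00]
      show _ ↔ _ = (1 : P) ∨ _ = (⟨s, Multiplicative.ofAdd 1⟩ : P)
      rw [hz, hone]
      dsimp only [toAdd_ofAdd]
      rw [if_pos rfl, if_pos rfl]
      constructor
      · intro h; left; rw [h₀ h, inv_mul_cancel]
      · rintro (h | h)
        · have h2 := congrArg SemidirectProduct.left h
          dsimp only at h2
          rw [inv_mul_eq_one] at h2; rw [h2]
        · have h2 := congrArg SemidirectProduct.right h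
          dsimp only at h2
          exact absurd h2 (by decide)
    · have hz : (⟨x, Multiplicative.ofAdd 0⟩ : P)⁻¹ * ⟨y, Multiplicative.ofAdd 1⟩
          = ⟨x⁻¹ * y, Multiplicative.ofAdd 1⟩ := by
        rw [mk_inv, mk_mul, invHom_zero, invHom_zero, h01]
      show _ ↔ _ = (1 : P) ∨ _ = (⟨s, Multiplicative.ofAdd 1⟩ : P)
      rw [hz, hone]
      dsimp only [toAdd_ofAdd]
      rw [if_pos rfl, if_neg (by decide)]
      constructor
      · intro h
        rw [hshift x] at h
        have h2 := h₁ h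
        right
        have hcomp : x⁻¹ * y = s := by
          rw [← h2, mul_comm s x, ← mul_assoc, inv_mul_cancel, one_mul]
        rw [hcomp]
      · rintro (h | h)
        · have h2 := congrArg SemidirectProduct.right h
          dsimp only at h2
          exact absurd h2 (by decide)
        · have h2 := congrArg SemidirectProduct.left h
          dsimp only at h2
          rw [inv_mul_eq_iff_eq_mul] at h2
          rw [h2, mul_comm x s]
          exact hshift x
    · have hz : (⟨x, Multiplicative.ofAdd 1⟩ : P)⁻¹ * ⟨y, Multiplicative.ofAdd 0⟩
          = ⟨x * y⁻¹, Multiplicative.ofAdd 1⟩ := by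
        rw [mk_inv, mk_mul, invHom_one, invHom_one, inv_inv, h10]
      show _ ↔ _ = (1 : P) ∨ _ = (⟨s, Multiplicative.ofAdd 1⟩ : P)
      rw [hz, hone]
      dsimp only [toAdd_ofAdd]
      rw [if_neg (by decide), if_pos rfl]
      constructor
      · intro h
        rw [hshift y] at h
        have h2 := h₁ h
        right
        have hcomp : x * y⁻¹ = s := by
          rw [h2, mul_assoc, mul_inv_cancel, mul_one]
        rw [hcomp]
      · rintro (h | h)
        · have h2 := congrArg SemidirectProduct.right h
          dsimp only at h2
          exact absurd h2 (by decide)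
        · have h2 := congrArg SemidirectProduct.left h
          dsimp only at h2
          rw [mul_inv_eq_iff_eq_mul] at h2
          rw [hshift y, h2, mul_comm s y]
    · have hz : (⟨x, Multiplicative.ofAdd 1⟩ : P)⁻¹ * ⟨y, Multiplicative.ofAdd 1⟩
          = ⟨x * y⁻¹, Multiplicative.ofAdd 0⟩ := by
        rw [mk_inv, mk_mul, invHom_one, invHom_one, inv_inv, hmulone]
      show _ ↔ _ = (1 : P) ∨ _ = (⟨s, Multiplicative.ofAdd 1⟩ : P)
      rw [hz, hone]
      dsimp only [toAdd_ofAdd]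
      rw [if_neg (by decide), if_neg (by decide)]
      constructor
      · intro h; left; rw [h₁ h, mul_inv_cancel]
      · rintro (h | h)
        · have h2 := congrArg SemidirectProduct.left h
          dsimp only at h2
          rw [mul_inv_eq_one] at h2; rw [h2]
        · have h2 := congrArg SemidirectProduct.right h
          dsimp only at h2
          exact absurd h2 (by decide)
end

section
/- Let n, r, N be positive integers with n·r ≤ N, and let ε be a real number with 0 < |ε| ≤ 1/2. Then sin²(π ε r n / N) / ( n N sin²(π ε r / N) ) ≥ 4 n / (π² N). (This is the key estimate showing that in period finding over ℤ, Fourier sampling over ℤ/Nℤ returns the nearest integer to a multiple jN/r of N/r with probability Ω(1/r): taking ε to be the rounding error gives Pr(k = ⌊jN/r⌉) ≥ 4/(π² r) when n ≥ N/r.) -/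
lemma sin_sq_abs' (y : ℝ) : Real.sin y ^ 2 = Real.sin |y| ^ 2 := by
  rcases abs_cases y with ⟨h, _⟩ | ⟨h, _⟩ <;> rw [h] <;> simp [Real.sin_neg]

/-- Key estimate for period finding over ℤ: for `n·r ≤ N` and `0 < |ε| ≤ 1/2`,
`sin²(πεrn/N) / (nN sin²(πεr/N)) ≥ 4n/(π²N)`. -/
theorem stmt_7 (n r N : ℕ) (hn : 0 < n) (hr : 0 < r) (hN : 0 < N)
    (hnrN : n * r ≤ N) (ε : ℝ) (hε0 : 0 < |ε|) (hε : |ε| ≤ 1 / 2) :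
    4 * n / (Real.pi ^ 2 * N) ≤
      Real.sin (Real.pi * ε * r * n / N) ^ 2 /
        (n * N * Real.sin (Real.pi * ε * r / N) ^ 2) := by
  have hπ := Real.pi_pos
  have hNp : (0:ℝ) < N := by exact_mod_cast hN
  have hnp : (0:ℝ) < n := by exact_mod_cast hn
  have hrp : (0:ℝ) < r := by exact_mod_cast hr
  have hn1 : (1:ℝ) ≤ n := by exact_mod_cast hn
  have hnr : (n:ℝ) * r ≤ N := by exact_mod_cast hnrN
  set x : ℝ := Real.pi * ε * r / N with hxdef
  have hxn : Real.pi * ε * r * n / N = (n:ℝ) * x := by rw [hxdef]; ring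
  have hxabs : |x| = Real.pi * |ε| * r / N := by
    rw [hxdef, abs_div, abs_mul, abs_mul, abs_of_pos hπ, abs_of_pos hrp, abs_of_pos hNp]
  have hx0 : 0 < |x| := by rw [hxabs]; positivity
  have hnx : (n:ℝ) * |x| ≤ Real.pi / 2 := by
    rw [hxabs, mul_div_assoc', div_le_iff₀ hNp]
    nlinarith [mul_nonneg (mul_nonneg (mul_nonneg hπ.le hrp.le) hnp.le) (sub_nonneg.2 hε),
      mul_nonneg (mul_nonneg hπ.le (by norm_num : (0:ℝ) ≤ 1/2)) (sub_nonneg.2 hnr)]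
  have hx2 : |x| ≤ Real.pi / 2 := by nlinarith
  have hlow : 2 / Real.pi * ((n:ℝ) * |x|) ≤ Real.sin ((n:ℝ) * |x|) :=
    Real.mul_le_sin (by positivity) hnx
  have hlow' : 2 * ((n:ℝ) * |x|) ≤ Real.sin ((n:ℝ) * |x|) * Real.pi := by
    rw [div_mul_eq_mul_div, div_le_iff₀ hπ] at hlow; linarith
  have hsx : 0 < Real.sin |x| :=
    lt_of_lt_of_le (by positivity) (Real.mul_le_sin hx0.le hx2)
  have hup : Real.sin |x| ≤ |x| := Real.sin_le (abs_nonneg x)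
  have hS2 : (2 * ((n:ℝ) * |x|)) ^ 2 ≤ (Real.sin ((n:ℝ) * |x|) * Real.pi) ^ 2 :=
    pow_le_pow_left₀ (by positivity) hlow' 2
  have hs2 : Real.sin |x| ^ 2 ≤ |x| ^ 2 := pow_le_pow_left₀ hsx.le hup 2
  have hxe : Real.sin x ^ 2 = Real.sin |x| ^ 2 := sin_sq_abs' x
  have hnxe : Real.sin ((n:ℝ) * x) ^ 2 = Real.sin ((n:ℝ) * |x|) ^ 2 := by
    rw [sin_sq_abs' ((n:ℝ) * x), abs_mul, Nat.abs_cast]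
  rw [hxn, div_le_div_iff₀ (by positivity) (by rw [hxe]; exact mul_pos (mul_pos hnp hNp) (pow_pos hsx 2)), hxe, hnxe]
  nlinarith [sq_nonneg (Real.sin ((n:ℝ) * |x|)), mul_pos hnp hNp,
    mul_le_mul_of_nonneg_left hs2 (by positivity : (0:ℝ) ≤ 4 * n * (n * N))]
end

section
/- Let p be an odd prime and let s, t, u, v, α, β ∈ F_p satisfy s·u·(s+u) ≠ 0. Define Δ := (2βs + αs − α² − 2αt)(s+u)u + (αu + tu − sv)², and for x ∈ F_p write C(x,2) := x(x−1)/2 (well defined since 2 is invertible in F_p). Then the number of solutions (x,y) ∈ F_p × F_p of the system sx + uy = α and s·C(x,2) + tx + u·C(y,2) + vy = β equals 2 if Δ is a nonzero square in F_p, equals 1 if Δ = 0, and equals 0 if Δ is not a square in F_p. -/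
/-!
Solving the linear equation for `y = (α - s x) / u` and substituting it into twice `u` times the
second equation leaves the quadratic `s(s+u) x² + 2(tu - αs - vs) x + (α² - αu + 2vα - 2uβ) = 0`,
whose reduced discriminant `(tu - αs - vs)² - s(s+u)(α² - αu + 2vα - 2uβ)` is `Δ`. Completing the
square, `x ↦ s(s+u) x + (tu - αs - vs)` maps its roots bijectively onto the square roots of `Δ`,
and since `2 ≠ 0` there are one, two or none of them.
-/

section
variable {K : Type*} [Field K]

lemma card_mul_self_eq [NeZero (2 : K)] [DecidableEq K] [DecidablePred (IsSquare : K → Prop)]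
    (d : K) :
    Nat.card {z : K // z * z = d} = if d = 0 then 1 else if IsSquare d then 2 else 0 := by
  split_ifs with hd hsq
  · subst hd
    simp only [mul_self_eq_zero]
    exact Nat.card_unique
  · obtain ⟨r, rfl⟩ := hsq
    have hr0 : r ≠ 0 := fun h => hd (by rw [h, mul_zero])
    have hr : r ≠ -r := fun h =>
      hr0 ((mul_eq_zero.mp (by linear_combination h : (2 : K) * r = 0)).resolve_left two_ne_zero)
    simp only [mul_self_eq_mul_self_iff]
    exact (Nat.card_coe_set_eq {r, -r}).trans (Set.ncard_pair hr)
  · have : IsEmpty {z : K // z * z = d} := ⟨fun ⟨z, hz⟩ => hsq ⟨z, hz.symm⟩⟩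
    exact Nat.card_of_isEmpty

lemma card_quadratic_roots_eq_card_mul_self_eq {a b c d : K} (ha : a ≠ 0)
    (hd : b * b - a * c = d) :
    Nat.card {x : K // a * x * x + 2 * b * x + c = 0} = Nat.card {z : K // z * z = d} :=
  Nat.card_congr <| Equiv.subtypeEquiv ((Equiv.mulLeft₀ a ha).trans (Equiv.addRight b)) fun x => by
    have hsq : (a * x + b) * (a * x + b) - d = a * (a * x * x + 2 * b * x + c) := by
      rw [← hd]; ring
    simp only [Equiv.trans_apply, Equiv.mulLeft₀_apply, Equiv.coe_addRight]
    rw [← sub_eq_zero (b := d), hsq, mul_eq_zero, or_iff_right ha]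

lemma card_subtype_eq_of_iff_graph {X Y : Type*} {Q : X × Y → Prop} {P : X → Prop} {f : X → Y}
    (hQ : ∀ x y, Q (x, y) ↔ P x ∧ y = f x) :
    Nat.card {q // Q q} = Nat.card {x // P x} :=
  Nat.card_congr
    { toFun := fun q => ⟨q.1.1, ((hQ _ _).mp q.2).1⟩
      invFun := fun x => ⟨(x.1, f x.1), (hQ _ _).mpr ⟨x.2, rfl⟩⟩
      left_inv := fun q => Subtype.ext (Prod.ext rfl ((hQ _ _).mp q.2).2.symm)
      right_inv := fun _ => rfl }

lemma linear_binomial_system_iff [NeZero (2 : K)] {s t u v α β : K} (hu : u ≠ 0) (x y : K) :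
    (s * x + u * y = α ∧ s * (x * (x - 1) / 2) + t * x + u * (y * (y - 1) / 2) + v * y = β) ↔
      (s * (s + u) * x * x + 2 * (t * u - α * s - v * s) * x
          + (α ^ 2 - α * u + 2 * v * α - 2 * u * β) = 0 ∧ y = (α - s * x) / u) := by
  have hlin_iff : y = (α - s * x) / u ↔ s * x + u * y = α := by
    rw [eq_div_iff hu]
    constructor <;> intro h <;> linear_combination h
  rw [hlin_iff, and_comm (a := _ = 0)]
  refine and_congr_right fun hlin => ?_
  have hquad : s * (s + u) * x * x + 2 * (t * u - α * s - v * s) * x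
      + (α ^ 2 - α * u + 2 * v * α - 2 * u * β)
      = 2 * u * (s * (x * (x - 1) / 2) + t * x + u * (y * (y - 1) / 2) + v * y - β) := by
    field_simp
    linear_combination (s * x - u * y - α + u - 2 * v) * hlin
  rw [hquad, mul_eq_zero, sub_eq_zero, or_iff_right (mul_ne_zero two_ne_zero hu)]

end

open scoped Classical in
/-- The number of solutions of the system of equations arising in the pretty good
measurement for the Heisenberg group: with `su(s+u) ≠ 0` and the discriminant `Δ`,
there are 2 solutions if `Δ` is a nonzero square, 1 if `Δ = 0`, and 0 otherwise. -/
theorem stmt_17 (p : ℕ) [Fact p.Prime] (hp : p ≠ 2)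
    (s t u v α β : ZMod p) (h : s * u * (s + u) ≠ 0) :
    let Δ : ZMod p :=
      (2 * β * s + α * s - α ^ 2 - 2 * α * t) * (s + u) * u + (α * u + t * u - s * v) ^ 2
    let C : ZMod p → ZMod p := fun x => x * (x - 1) / 2
    Nat.card {q : ZMod p × ZMod p //
        s * q.1 + u * q.2 = α ∧
        s * C q.1 + t * q.1 + u * C q.2 + v * q.2 = β} =
      if Δ = 0 then 1 else if IsSquare Δ then 2 else 0 := by
  intro Δ C
  simp only [C]
  have : NeZero (2 : ZMod p) := ⟨Ring.two_ne_zero (by rwa [ZMod.ringChar_zmod_n])⟩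
  have hs : s ≠ 0 := left_ne_zero_of_mul (left_ne_zero_of_mul h)
  have hu : u ≠ 0 := right_ne_zero_of_mul (left_ne_zero_of_mul h)
  have hsu : s + u ≠ 0 := right_ne_zero_of_mul h
  calc _ = Nat.card {x : ZMod p // s * (s + u) * x * x + 2 * (t * u - α * s - v * s) * x
            + (α ^ 2 - α * u + 2 * v * α - 2 * u * β) = 0} :=
        card_subtype_eq_of_iff_graph (linear_binomial_system_iff hu)
    _ = Nat.card {z : ZMod p // z * z = Δ} :=
        card_quadratic_roots_eq_card_mul_self_eq (mul_ne_zero hs hsu) (by ring)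
    _ = _ := by convert card_mul_self_eq Δ
end
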